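/- arXiv:1907.08670 — 2 statements merged into one kernel-verified Lean document; each statement's English description precedes it below -/
import Mathlib

section
/- Let A be a finitely generated abelian group, N a positive integer, u₀ an element of A ⊗ ℝ lying in the image of A, and C a nonempty open cone in A ⊗ ℝ (i.e., a nonempty open subset closed under multiplication by positive scalars). Then the coset u₀ + N·A, viewed inside A ⊗ ℝ, has nonempty intersection with C. -/
/- STATEMENT 0: A finitely generated abelian group `A`, mapped to the real vector
space `V = A ⊗ ℝ` via `φ` (whose image spans `V`), a positive integer `N`, an element
`u₀ = φ a₀` in the image of `A`, and a nonempty open cone `C ⊆ V`: the coset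
`u₀ + N·A` meets `C`. -/
theorem stmt0 (A : Type*) [AddCommGroup A] (hA : AddGroup.FG A)
    (V : Type*) [NormedAddCommGroup V] [NormedSpace ℝ V] [FiniteDimensional ℝ V]
    (φ : A →+ V) (hspan : Submodule.span ℝ (Set.range φ) = ⊤)
    (a₀ : A) (N : ℕ) (hN : 0 < N)
    (C : Set V) (hCne : C.Nonempty) (hCopen : IsOpen C)
    (hCcone : ∀ r : ℝ, 0 < r → ∀ x ∈ C, r • x ∈ C) :
    ∃ a : A, φ (a₀ + N • a) ∈ C := by
  classical
  obtain ⟨x, hx⟩ := hCne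
  have hxmem : x ∈ Submodule.span ℝ (Set.range φ) := by rw [hspan]; trivial
  obtain ⟨c, hsupp, hsum⟩ := Submodule.mem_span_set.mp hxmem
  set s : Finset V := c.support with hs
  -- choose preimages under φ
  have hrange : ∀ v ∈ s, ∃ a : A, φ a = v := fun v hv => hsupp hv
  choose a ha using hrange
  -- the continuous evaluation map
  set F : (↥s → ℝ) → V := fun d => ∑ v ∈ s.attach, d v • (v : V) with hF
  have hFcont : Continuous F := by
    apply continuous_finset_sum
    intro v _
    exact (continuous_apply v).smul continuous_const
  have hFx : F (fun v => c v) = x := by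
    rw [← hsum, Finsupp.sum, hF]
    exact Finset.sum_attach s (fun v => c v • v)
  -- open preimage, find rational point nearby
  have hU : IsOpen (F ⁻¹' C) := hCopen.preimage hFcont
  have hcU : (fun v : ↥s => c v) ∈ F ⁻¹' C := by
    simp only [Set.mem_preimage, hFx]; exact hx
  obtain ⟨ε, hε, hball⟩ := Metric.isOpen_iff.mp hU _ hcU
  have hq : ∀ v : V, ∃ q : ℚ, |c v - (q : ℝ)| < ε := fun v => exists_rat_near (c v) hε
  choose q hqnear using hq
  have hqmem : F (fun v => (q v : ℝ)) ∈ C := by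
    apply hball
    rw [Metric.mem_ball, dist_pi_lt_iff hε]
    intro v
    rw [Real.dist_eq, abs_sub_comm]
    exact hqnear v
  -- clear denominators
  set D : ℕ := ∏ v ∈ s, (q v).den with hD
  have hDpos : 0 < D := Finset.prod_pos fun v _ => (q v).pos
  have hdvd : ∀ v ∈ s, (q v).den ∣ D := fun v hv => Finset.dvd_prod_of_mem _ hv
  -- integer coefficients
  have hzq : ∀ v ∈ s, ((((q v) * D : ℚ).num : ℚ)) = q v * D := by
    intro v hv
    apply Rat.coe_int_num_of_den_eq_one
    obtain ⟨m, hm⟩ := hdvd v hv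
    have : (q v) * (D : ℚ) = (q v).num * m := by
      rw [hm]
      push_cast
      rw [← mul_assoc, Rat.mul_den_eq_num]
    rw [this]
    have h3 : ((q v).num : ℚ) * (m : ℚ) = (((q v).num * m : ℤ) : ℚ) := by push_cast; ring
    rw [h3, Rat.den_intCast]
  set b : A := ∑ v ∈ s.attach, (((q v) * D : ℚ).num) • a v v.2 with hb
  have hφb : φ b = (D : ℝ) • F (fun v => (q v : ℝ)) := by
    rw [hb, map_sum, hF, Finset.smul_sum]
    apply Finset.sum_congr rfl
    intro v _
    have h2 : ((((q ↑v) * D : ℚ).num : ℝ)) = ((q ↑v : ℝ)) * D := by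
      have h4 := congrArg (fun t : ℚ => (t : ℝ)) (hzq v v.2)
      push_cast at h4 ⊢
      linarith
    rw [map_zsmul, ha v v.2, ← Int.cast_smul_eq_zsmul ℝ, smul_smul, h2, mul_comm]
  have hφbC : φ b ∈ C := by
    rw [hφb]
    exact hCcone _ (by exact_mod_cast hDpos) _ hqmem
  -- now approach φ b from the coset
  set w : V := φ b with hw
  have htend : Filter.Tendsto (fun k : ℕ => w + ((k * N : ℝ))⁻¹ • φ a₀)
      Filter.atTop (nhds w) := by
    have h1 : Filter.Tendsto (fun k : ℕ => ((k * N : ℝ))⁻¹) Filter.atTop (nhds 0) := by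
      apply Filter.Tendsto.inv_tendsto_atTop
      apply Filter.Tendsto.atTop_mul_const (by exact_mod_cast hN)
      exact tendsto_natCast_atTop_atTop
    have h2 : Filter.Tendsto (fun k : ℕ => ((k * N : ℝ))⁻¹ • φ a₀) Filter.atTop (nhds 0) := by
      simpa using h1.smul_const (φ a₀)
    simpa using (tendsto_const_nhds.add h2)
  have hev : ∀ᶠ k : ℕ in Filter.atTop, w + ((k * N : ℝ))⁻¹ • φ a₀ ∈ C :=
    htend.eventually (hCopen.mem_nhds hφbC)
  obtain ⟨k, hkC, hk1⟩ := (hev.and (Filter.eventually_ge_atTop 1)).exists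
  -- scale back
  have hk0 : 0 < k := hk1
  have hkN : (0 : ℝ) < (k * N : ℝ) := by exact_mod_cast Nat.mul_pos hk0 hN
  have hscaled : (k * N : ℝ) • (w + ((k * N : ℝ))⁻¹ • φ a₀) ∈ C := hCcone _ hkN _ hkC
  refine ⟨k • b, ?_⟩
  have : φ (a₀ + N • k • b) = φ a₀ + (k * N : ℝ) • w := by
    rw [map_add, map_nsmul, map_nsmul, hw, ← Nat.cast_smul_eq_nsmul ℝ N,
      ← Nat.cast_smul_eq_nsmul ℝ k, smul_smul, mul_comm (N : ℝ) (k : ℝ)]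
  rw [this]
  have heq : (k * N : ℝ) • (w + ((k * N : ℝ))⁻¹ • φ a₀) = φ a₀ + (k * N : ℝ) • w := by
    rw [smul_add, smul_smul, mul_inv_cancel₀ (ne_of_gt hkN), one_smul]
    ring_nf
    abel
  rw [← heq]
  exact hscaled
end

section
/- Let X be a smooth projective variety over the separable closure k_s of a field k, let l be a prime invertible in k, and suppose the Néron–Severi group NS(X) is finitely generated. Given the Kummer exact sequences 0 → Pic(X)/l^r → H²_ét(X, μ_{l^r}) → Hom(ℤ/l^r, Br(X)) → 0 for all r ≥ 1, with Pic(X)/l^r = NS(X)/l^r, the inverse limit over r yields an exact sequence 0 → NS(X) ⊗ ℤ_l → H²(X, ℤ_l(1)) → Hom(ℚ_l/ℤ_l, Br(X)) → 0, and the group Hom(ℚ_l/ℤ_l, Br(X)) is torsion-free. -/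
open scoped TensorProduct

noncomputable section

variable (l : ℕ) [Fact l.Prime]

/-- The inverse limit `lim_r H²(X, μ_{l^r})` of the cohomology groups, as an
additive subgroup of the product, with transition maps `t`. -/
def H2lim (H : ℕ → Type*) [∀ r, AddCommGroup (H r)]
    (t : ∀ r : ℕ, H (r + 1) →+ H r) : AddSubgroup (∀ r, H r) where
  carrier := {f | ∀ r, t r (f (r + 1)) = f r}
  add_mem' := by intro f g hf hg r; simp [map_add, hf r, hg r]
  zero_mem' := by intro r; simp
  neg_mem' := by intro f hf r; simp [map_neg, hf r]

/-- `Hom(ℚ_l/ℤ_l, Br) = lim_r Br[l^r]`, the `l`-adic Tate module of `Br`,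
realized as compatible sequences of `l^r`-torsion elements. -/
def tateModule (Br : Type*) [AddCommGroup Br] : AddSubgroup (∀ _ : ℕ, Br) where
  carrier := {f | (∀ r, l • f (r + 1) = f r) ∧ ∀ r, (l ^ r) • f r = 0}
  add_mem' := by
    rintro f g ⟨hf1, hf2⟩ ⟨hg1, hg2⟩
    exact ⟨fun r => by simp [smul_add, hf1 r, hg1 r],
      fun r => by simp [smul_add, hf2 r, hg2 r]⟩
  zero_mem' := ⟨fun r => by simp, fun r => by simp⟩
  neg_mem' := by
    rintro f ⟨hf1, hf2⟩
    exact ⟨fun r => by simp [hf1 r], fun r => by simp [hf2 r]⟩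

lemma appr_dvd_sub (c : ℤ_[l]) (r : ℕ) : ((l : ℤ_[l]) ^ r) ∣ c - (c.appr r : ℤ_[l]) := by
  have := PadicInt.appr_spec r c
  rwa [Ideal.mem_span_singleton] at this

lemma key_dvd {NS Hr : Type*} [AddCommGroup NS] [AddCommGroup Hr] (a : NS →+ Hr) (r : ℕ)
    (hker : ∀ x : NS, a x = 0 ↔ ∃ y, (l ^ r) • y = x) (m : ℤ) (x : NS)
    (h : ((l : ℤ_[l]) ^ r) ∣ (m : ℤ_[l])) : a (m • x) = 0 := by
  rw [PadicInt.pow_p_dvd_int_iff] at h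
  obtain ⟨e, he⟩ := h
  refine (hker _).2 ⟨e • x, ?_⟩
  rw [he, mul_smul, ← natCast_zsmul (e • x) (l ^ r)]
  push_cast
  ring_nf

lemma key_congr {NS Hr : Type*} [AddCommGroup NS] [AddCommGroup Hr] (a : NS →+ Hr) (r : ℕ)
    (hker : ∀ x : NS, a x = 0 ↔ ∃ y, (l ^ r) • y = x) (m₁ m₂ : ℤ) (x : NS)
    (h : ((l : ℤ_[l]) ^ r) ∣ ((m₁ : ℤ_[l]) - m₂)) : a (m₁ • x) = a (m₂ • x) := by
  have : a ((m₁ - m₂) • x) = 0 := by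
    refine key_dvd l a r hker _ x ?_
    push_cast
    exact h
  rw [sub_smul, map_sub, sub_eq_zero] at this
  exact this

/- STATEMENT 4 (Lemma `codim1` of the paper): `X` smooth projective over the
separable closure of `k`, `l` invertible in `k`, `NS = NS(X)` finitely generated,
`Br = Br(X)`, and `H r = H²_ét(X, μ_{l^r})`.  Given the Kummer exact sequences
`0 → NS/l^r → H²(X, μ_{l^r}) → Hom(ℤ/l^r, Br) → 0` (hypotheses `hker_a`,
`hexact`, `htors_b`, `hsurj_b`, with `Hom(ℤ/l^r, Br) = Br[l^r]`) compatible with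
the transition maps (`hta`, `htb`), the inverse limit yields an exact sequence
`0 → NS ⊗ ℤ_l → H²(X, ℤ_l(1)) → Hom(ℚ_l/ℤ_l, Br) → 0`, and the last group is
torsion-free. -/
set_option maxHeartbeats 1000000 in
theorem stmt4 (NS Br : Type*) [AddCommGroup NS] [AddCommGroup Br]
    (hNS : AddGroup.FG NS)
    (H : ℕ → Type*) [∀ r, AddCommGroup (H r)]
    (t : ∀ r : ℕ, H (r + 1) →+ H r)
    (a : ∀ r : ℕ, NS →+ H r)
    (b : ∀ r : ℕ, H r →+ Br)
    (hta : ∀ (r : ℕ) (x : NS), t r (a (r + 1) x) = a r x)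
    (hker_a : ∀ (r : ℕ) (x : NS), a r x = 0 ↔ ∃ y : NS, (l ^ r) • y = x)
    (htors_b : ∀ (r : ℕ) (x : H r), (l ^ r) • b r x = 0)
    (hsurj_b : ∀ (r : ℕ) (y : Br), (l ^ r) • y = 0 → ∃ x : H r, b r x = y)
    (hexact : ∀ (r : ℕ) (x : H r), b r x = 0 ↔ ∃ y : NS, a r y = x)
    (htb : ∀ (r : ℕ) (x : H (r + 1)), b r (t r x) = l • b (r + 1) x) :
    ∃ (α : NS ⊗[ℤ] ℤ_[l] →+ H2lim H t)
      (β : (H2lim H t : AddSubgroup (∀ r, H r)) →+ tateModule l Br),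
      (∀ (x : NS) (c : ℤ_[l]) (r : ℕ),
        (α (x ⊗ₜ[ℤ] c) : ∀ r, H r) r = a r ((c.appr r) • x)) ∧
      (∀ (f : H2lim H t) (r : ℕ), (β f : ∀ _ : ℕ, Br) r = b r ((f : ∀ r, H r) r)) ∧
      Function.Injective α ∧
      (∀ y : H2lim H t, β y = 0 ↔ ∃ x, α x = y) ∧
      Function.Surjective β ∧
      (∀ (f : tateModule l Br) (n : ℕ), n ≠ 0 → n • f = 0 → f = 0) := by
  classical
  -- the underlying function of α on pure tensors
  set g : NS → ℤ_[l] → ∀ r, H r := fun x c r => a r ((c.appr r : ℤ) • x) with hg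
  have hg_mem : ∀ x c, g x c ∈ H2lim H t := by
    intro x c r
    show t r (a (r+1) _) = a r ((c.appr r : ℤ) • x)
    rw [hta]
    exact key_congr l (a r) r (hker_a r) _ _ x (by
      have h1 := appr_dvd_sub l c (r+1)
      have h2 := appr_dvd_sub l c r
      have : ((l : ℤ_[l]) ^ r) ∣ (c - (c.appr (r+1) : ℤ_[l])) :=
        dvd_trans (pow_dvd_pow _ (Nat.le_succ r)) h1
      have := dvd_sub h2 this
      push_cast at this ⊢
      convert this using 1
      ring)
  set G : NS →ₗ[ℤ] ℤ_[l] →ₗ[ℤ] H2lim H t := LinearMap.mk₂ ℤ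
    (fun x c => ⟨g x c, hg_mem x c⟩)
    (by intro x y c; ext r; show a r _ = a r _ + a r _
        rw [← map_add, smul_add])
    (by intro k x c; ext r; show a r ((c.appr r : ℤ) • k • x) = k • a r ((c.appr r : ℤ) • x)
        rw [← map_zsmul, smul_comm])
    (by intro x c d; ext r
        show a r (((c+d).appr r : ℤ) • x) = a r ((c.appr r : ℤ) • x) + a r ((d.appr r : ℤ) • x)
        rw [← map_add, ← add_smul]
        refine key_congr l (a r) r (hker_a r) _ _ x ?_
        have h1 := appr_dvd_sub l (c+d) r
        have h2 := appr_dvd_sub l c r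
        have h3 := appr_dvd_sub l d r
        have := (h2.add h3).sub h1
        push_cast at this ⊢
        convert this using 1
        ring)
    (by intro k x c; ext r
        show a r (((k • c).appr r : ℤ) • x) = k • a r ((c.appr r : ℤ) • x)
        rw [← map_zsmul, smul_comm, ← smul_assoc, smul_eq_mul]
        refine key_congr l (a r) r (hker_a r) _ _ x ?_
        have h1 := appr_dvd_sub l (k • c) r
        have h2 := appr_dvd_sub l c r
        have : ((l:ℤ_[l])^r) ∣ (k • c - (k:ℤ_[l]) * (c.appr r : ℤ_[l])) := by
          have := h2.mul_left (k : ℤ_[l])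
          rw [mul_sub] at this
          simpa [zsmul_eq_mul] using this
        have := this.sub h1
        push_cast at this ⊢
        convert this using 1
        ring) with hG
  set α : NS ⊗[ℤ] ℤ_[l] →+ H2lim H t := (TensorProduct.lift G).toAddMonoidHom with hα
  have hαtmul : ∀ (x : NS) (c : ℤ_[l]) (r : ℕ),
      (α (x ⊗ₜ[ℤ] c) : ∀ r, H r) r = a r ((c.appr r) • x) := by
    intro x c r
    show a r ((c.appr r : ℤ) • x) = a r ((c.appr r) • x)
    rw [natCast_zsmul]
  -- β
  set β : (H2lim H t : AddSubgroup (∀ r, H r)) →+ tateModule l Br := AddMonoidHom.mk'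
    (fun f => ⟨fun r => b r ((f : ∀ r, H r) r), ⟨fun r => by rw [← htb, f.2 r], fun r => htors_b r _⟩⟩)
    (by intro f g; ext r; simp) with hβ
  refine ⟨α, β, hαtmul, fun f r => rfl, ?_, ?_, ?_, ?_⟩
  · -- injectivity of α
    rw [injective_iff_map_eq_zero]
    intro z hz
    have hdvd : ∀ r : ℕ, ∃ w : NS ⊗[ℤ] ℤ_[l], ((l:ℤ)^r) • w = z := by
      intro r
      obtain ⟨Sf, hSf⟩ := TensorProduct.exists_finset z
      set E : NS ⊗[ℤ] ℤ_[l] →+ H r :=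
        ((Pi.evalAddMonoidHom H r).comp ((H2lim H t).subtype)).comp α with hE
      have hEz : E z = a r (∑ p ∈ Sf, ((p.2.appr r : ℤ)) • p.1) := by
        rw [hSf, map_sum, map_sum]
        refine Finset.sum_congr rfl fun p hp => ?_
        show (α (p.1 ⊗ₜ[ℤ] p.2) : ∀ r, H r) r = _
        rw [hαtmul, natCast_zsmul]
      have hz0 : a r (∑ p ∈ Sf, ((p.2.appr r : ℤ)) • p.1) = 0 := by
        rw [← hEz]
        show (α z : ∀ r, H r) r = 0
        rw [hz]
        rfl
      obtain ⟨y', hy'⟩ := (hker_a r _).1 hz0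
      have hdp : ∀ p : NS × ℤ_[l], ∃ dd : ℤ_[l],
          p.2 - (p.2.appr r : ℤ_[l]) = (l:ℤ_[l])^r * dd := fun p => appr_dvd_sub l p.2 r
      choose d hd using hdp
      refine ⟨y' ⊗ₜ[ℤ] 1 + ∑ p ∈ Sf, p.1 ⊗ₜ[ℤ] d p, ?_⟩
      rw [smul_add, Finset.smul_sum]
      have h1 : ((l:ℤ)^r) • (y' ⊗ₜ[ℤ] (1:ℤ_[l])) = ∑ p ∈ Sf, p.1 ⊗ₜ[ℤ] ((p.2.appr r : ℤ_[l])) := by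
        rw [TensorProduct.smul_tmul']
        have : ((l:ℤ)^r) • y' = ∑ p ∈ Sf, ((p.2.appr r : ℤ)) • p.1 := by
          rw [← hy', ← Nat.cast_pow, natCast_zsmul]
        rw [this, TensorProduct.sum_tmul]
        refine Finset.sum_congr rfl fun p hp => ?_
        rw [TensorProduct.smul_tmul]
        congr 1
        rw [zsmul_eq_mul, mul_one]
        norm_cast
      have h2 : ∀ p : NS × ℤ_[l], ((l:ℤ)^r) • (p.1 ⊗ₜ[ℤ] d p)
          = p.1 ⊗ₜ[ℤ] p.2 - p.1 ⊗ₜ[ℤ] ((p.2.appr r : ℤ_[l])) := by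
        intro p
        rw [← TensorProduct.tmul_smul, ← TensorProduct.tmul_sub]
        congr 1
        rw [zsmul_eq_mul, hd p]
        push_cast
        ring
      rw [h1, Finset.sum_congr rfl fun p _ => h2 p, Finset.sum_sub_distrib, ← hSf]
      abel
    -- Krull intersection
    letI : Module.Finite ℤ NS := Module.Finite.iff_addGroup_fg.mpr hNS
    obtain ⟨nn, π, hπ⟩ := Module.Finite.exists_fin' ℤ NS
    set Q := (Fin nn → ℤ) ⧸ LinearMap.ker π with hQ
    letI : Module.Finite ℤ Q :=
      Module.Finite.of_surjective (Submodule.mkQ _) (Submodule.Quotient.mk_surjective _)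
    set e0 : Q ≃ₗ[ℤ] NS := π.quotKerEquivOfSurjective hπ with he0
    set cEquiv : (NS ⊗[ℤ] ℤ_[l]) ≃ₗ[ℤ] (ℤ_[l] ⊗[ℤ] Q) :=
      (TensorProduct.congr e0.symm (LinearEquiv.refl ℤ ℤ_[l])).trans
        (TensorProduct.comm ℤ Q ℤ_[l]) with heq
    have hmem : ∀ i : ℕ, (cEquiv z : ℤ_[l] ⊗[ℤ] Q) ∈
        ((IsLocalRing.maximalIdeal ℤ_[l]) ^ i • ⊤ : Submodule ℤ_[l] (ℤ_[l] ⊗[ℤ] Q)) := by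
      intro i
      obtain ⟨w, hw⟩ := hdvd i
      have h3 : cEquiv z = ((l:ℤ_[l])^i) • (cEquiv w) := by
        rw [← hw, map_zsmul, ← Int.cast_smul_eq_zsmul (R := ℤ_[l])]
        push_cast
        rfl
      rw [h3]
      refine Submodule.smul_mem_smul (Ideal.pow_mem_pow ?_ i) Submodule.mem_top
      rw [PadicInt.maximalIdeal_eq_span_p]
      exact Ideal.mem_span_singleton_self _
    have hbot := Ideal.iInf_pow_smul_eq_bot_of_isLocalRing
      (R := ℤ_[l]) (M := ℤ_[l] ⊗[ℤ] Q) (I := IsLocalRing.maximalIdeal ℤ_[l])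
      ((IsLocalRing.maximalIdeal.isMaximal ℤ_[l]).ne_top)
    have h0 : cEquiv z = 0 := by
      have : cEquiv z ∈ (⨅ i : ℕ, (IsLocalRing.maximalIdeal ℤ_[l]) ^ i • ⊤ :
          Submodule ℤ_[l] (ℤ_[l] ⊗[ℤ] Q)) := Submodule.mem_iInf _ |>.2 hmem
      rwa [hbot, Submodule.mem_bot] at this
    have := congrArg cEquiv.symm h0
    simpa using this
  · -- exactness at the middle
    intro y
    constructor
    · intro hy
      have hb0 : ∀ r, b r (y.1 r) = 0 := by
        intro r
        have h := congrArg Subtype.val hy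
        exact congrFun h r
      choose yN hyN using fun r => (hexact r (y.1 r)).1 (hb0 r)
      have hdiff : ∀ r, ∃ zr, (l^r) • zr = yN (r+1) - yN r := by
        intro r
        refine (hker_a r _).1 ?_
        have h4 : a r (yN (r+1)) = y.1 r := by
          rw [← hta r, hyN (r+1)]
          exact y.2 r
        rw [map_sub, hyN r, h4, sub_self]
      choose zN hzN using hdiff
      letI : Module.Finite ℤ NS := Module.Finite.iff_addGroup_fg.mpr hNS
      obtain ⟨nn, ee, hee⟩ := Module.Finite.exists_fin (R := ℤ) (M := NS)
      have hrep : ∀ x : NS, ∃ mm : Fin nn → ℤ, ∑ i, mm i • ee i = x := by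
        intro x
        exact (Submodule.mem_span_range_iff_exists_fun ℤ).1 (hee ▸ Submodule.mem_top)
      choose mN hmN using fun r => hrep (zN r)
      set S : ℕ → Fin nn → ℤ := fun r i => ∑ s ∈ Finset.range r, mN s i * l ^ s with hS
      have hyS : ∀ r, yN r = yN 0 + ∑ i, (S r i) • ee i := by
        intro r
        induction r with
        | zero => simp [hS]
        | succ r ih =>
          have e5 : yN (r+1) = yN r + (l^r : ℕ) • zN r := by
            rw [hzN r]
            abel
          rw [e5, ih]
          have e6 : (l^r : ℕ) • zN r = ∑ i, (mN r i * l ^ r) • ee i := by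
            rw [← hmN r, Finset.smul_sum]
            refine Finset.sum_congr rfl fun i _ => ?_
            rw [← natCast_zsmul (mN r i • ee i) (l^r), smul_smul]
            push_cast
            ring_nf
          rw [e6, add_assoc]
          congr 1
          rw [← Finset.sum_add_distrib]
          refine Finset.sum_congr rfl fun i _ => ?_
          rw [← add_smul]
          congr 1
          simp only [hS]
          rw [Finset.sum_range_succ]
      -- construct the limits
      have hIk : ∀ k : ℕ, ((IsLocalRing.maximalIdeal ℤ_[l]) ^ k • ⊤ : Submodule ℤ_[l] ℤ_[l])
          = Ideal.span {(l:ℤ_[l])^k} := by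
        intro k
        rw [smul_eq_mul, Ideal.mul_top, PadicInt.maximalIdeal_eq_span_p,
          Ideal.span_singleton_pow]
      have hCauchy : ∀ i, ∃ L : ℤ_[l], ∀ r, ((l:ℤ_[l])^r) ∣ (L - (S r i : ℤ_[l])) := by
        intro i
        have hcompat : ∀ {m n : ℕ}, m ≤ n →
            (fun r => ((S r i : ℤ) : ℤ_[l])) m ≡ (fun r => ((S r i : ℤ) : ℤ_[l])) n
              [SMOD ((IsLocalRing.maximalIdeal ℤ_[l]) ^ m • ⊤ : Submodule ℤ_[l] ℤ_[l])] := by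
          intro m n hmn
          rw [SModEq.sub_mem, hIk m, Ideal.mem_span_singleton]
          have hdint : ((l:ℤ)^m) ∣ (S m i - S n i) := by
            have h9 : S n i - S m i = ∑ s ∈ Finset.Ico m n, mN s i * l ^ s := by
              rw [hS, Finset.sum_Ico_eq_sub _ hmn]
            refine (dvd_sub_comm.mp ?_)
            rw [h9]
            refine Finset.dvd_sum fun s hs => ?_
            exact Dvd.dvd.mul_left (pow_dvd_pow (l:ℤ) (Finset.mem_Ico.1 hs).1) _
          obtain ⟨cc, hcc⟩ := hdint
          refine ⟨(cc : ℤ_[l]), ?_⟩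
          have := congrArg (fun q : ℤ => (q : ℤ_[l])) hcc
          push_cast at this ⊢
          convert this using 2
        obtain ⟨L, hL⟩ := (inferInstance :
            IsAdicComplete (IsLocalRing.maximalIdeal ℤ_[l]) ℤ_[l]).toIsPrecomplete.prec
          (f := fun r => ((S r i : ℤ) : ℤ_[l])) hcompat
        refine ⟨L, fun r => ?_⟩
        have := hL r
        rw [SModEq.sub_mem, hIk r, Ideal.mem_span_singleton] at this
        simpa using this.neg_right
      choose c hc using hCauchy
      refine ⟨yN 0 ⊗ₜ[ℤ] (1:ℤ_[l]) + ∑ i, ee i ⊗ₜ[ℤ] c i, ?_⟩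
      ext r
      show ((α _ : ∀ r, H r) r) = y.1 r
      set E : NS ⊗[ℤ] ℤ_[l] →+ H r :=
        ((Pi.evalAddMonoidHom H r).comp ((H2lim H t).subtype)).comp α with hE
      have hEz : (α (yN 0 ⊗ₜ[ℤ] (1:ℤ_[l]) + ∑ i, ee i ⊗ₜ[ℤ] c i) : ∀ r, H r) r
          = a r ((((1:ℤ_[l]).appr r : ℤ)) • yN 0 + ∑ i, (((c i).appr r : ℤ)) • ee i) := by
        have e1 : E (yN 0 ⊗ₜ[ℤ] (1:ℤ_[l])) = a r ((((1:ℤ_[l]).appr r : ℤ)) • yN 0) := by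
          show (α (yN 0 ⊗ₜ[ℤ] (1:ℤ_[l])) : ∀ r, H r) r = _
          rw [hαtmul, natCast_zsmul]
        have e2 : ∀ i, E (ee i ⊗ₜ[ℤ] c i) = a r ((((c i).appr r : ℤ)) • ee i) := by
          intro i
          show (α (ee i ⊗ₜ[ℤ] c i) : ∀ r, H r) r = _
          rw [hαtmul, natCast_zsmul]
        show E _ = _
        rw [map_add, map_sum, e1, Finset.sum_congr rfl fun i _ => e2 i,
          ← map_sum, ← map_add]
      rw [hEz]
      have hgoal : a r ((((1:ℤ_[l]).appr r : ℤ)) • yN 0 + ∑ i, (((c i).appr r : ℤ)) • ee i)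
          = a r ((1:ℤ) • yN 0 + ∑ i, (S r i) • ee i) := by
        have hzero : a r (((((1:ℤ_[l]).appr r : ℤ)) - 1) • yN 0
            + ∑ i, ((((c i).appr r : ℤ)) - S r i) • ee i) = 0 := by
          rw [map_add, map_sum]
          have t1 : a r (((((1:ℤ_[l]).appr r : ℤ)) - 1) • yN 0) = 0 := by
            refine key_dvd l (a r) r (hker_a r) _ _ ?_
            have h7 := appr_dvd_sub l (1:ℤ_[l]) r
            have := h7.neg_right
            push_cast at this ⊢
            convert this using 1
            ring
          have t2 : ∀ i, a r (((((c i).appr r : ℤ)) - S r i) • ee i) = 0 := by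
            intro i
            refine key_dvd l (a r) r (hker_a r) _ _ ?_
            have h7 := (appr_dvd_sub l (c i) r).neg_right
            have h8 := hc i r
            have := h7.add h8
            push_cast at this ⊢
            convert this using 1
            ring
          rw [t1, Finset.sum_eq_zero fun i _ => t2 i, add_zero]
        have hsplit : ((((1:ℤ_[l]).appr r : ℤ)) • yN 0 + ∑ i, (((c i).appr r : ℤ)) • ee i)
            - ((1:ℤ) • yN 0 + ∑ i, (S r i) • ee i)
            = ((((1:ℤ_[l]).appr r : ℤ)) - 1) • yN 0
              + ∑ i, ((((c i).appr r : ℤ)) - S r i) • ee i := by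
          simp only [sub_smul, Finset.sum_sub_distrib]
          abel
        rw [← sub_eq_zero, ← map_sub, hsplit]
        exact hzero
      rw [hgoal, one_smul, ← hyS r, hyN r]
    · rintro ⟨x, rfl⟩
      ext r
      show b r ((α x : ∀ r, H r) r) = 0
      induction x using TensorProduct.induction_on with
      | zero => rw [map_zero]; show b r ((0 : ∀ r, H r) r) = 0; simp
      | tmul u v =>
        rw [hαtmul]
        exact (hexact r _).2 ⟨_, rfl⟩
      | add u v hu hv =>
        rw [map_add]
        show b r (((α u : ∀ r, H r)) r + ((α v : ∀ r, H r)) r) = 0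
        rw [map_add, hu, hv, add_zero]
  · -- surjectivity of β
    intro gq
    have g1 := gq.2.1
    have g2 := gq.2.2
    have hstep : ∀ (r : ℕ) (x : H r), b r x = gq.1 r →
        ∃ y : H (r+1), b (r+1) y = gq.1 (r+1) ∧ t r y = x := by
      intro r x hx
      obtain ⟨x', hx'⟩ := hsurj_b (r+1) (gq.1 (r+1)) (g2 (r+1))
      have h0 : b r (t r x' - x) = 0 := by
        rw [map_sub, htb, hx', g1 r, hx, sub_self]
      obtain ⟨y, hy⟩ := (hexact r _).1 h0
      refine ⟨x' - a (r+1) y, ?_, ?_⟩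
      · rw [map_sub, hx', (hexact (r+1) (a (r+1) y)).2 ⟨y, rfl⟩, sub_zero]
      · rw [map_sub, hta, hy]
        abel
    have base : b 0 (0 : H 0) = gq.1 0 := by
      have := g2 0
      rw [pow_zero, one_smul] at this
      rw [map_zero, this]
    set F : ∀ r, {x : H r // b r x = gq.1 r} := fun r => Nat.rec ⟨0, base⟩
      (fun n prev => ⟨(hstep n prev.1 prev.2).choose, (hstep n prev.1 prev.2).choose_spec.1⟩) r
      with hF
    have hFt : ∀ r, t r (F (r+1)).1 = (F r).1 := fun r =>
      (hstep r (F r).1 (F r).2).choose_spec.2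
    refine ⟨⟨fun r => (F r).1, hFt⟩, ?_⟩
    ext r
    exact (F r).2
  · -- torsion-freeness
    intro f n hn hnf
    have hf1 := f.2.1
    have hf2 := f.2.2
    have hiter : ∀ (k r : ℕ), (l ^ k) • f.1 (r + k) = f.1 r := by
      intro k
      induction k with
      | zero => intro r; simp
      | succ k ih =>
        intro r
        have : r + (k+1) = (r + k) + 1 := by omega
        rw [this, pow_succ, mul_smul, hf1 (r + k), ih r]
    have hcomp : ∀ r, n • f.1 r = 0 := by
      intro r
      have h := congrArg Subtype.val hnf
      have h2 : n • f.1 = 0 := h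
      have := congrFun h2 r
      simpa using this
    set v := n.factorization l with hv
    set m := n / l ^ v with hm
    have hmn : l ^ v * m = n := Nat.ordProj_mul_ordCompl_eq_self n l
    have hml : ¬ l ∣ m := Nat.not_dvd_ordCompl (Fact.out : l.Prime) hn
    have hm0 : ∀ r, m • f.1 r = 0 := by
      intro r
      rw [← hiter v r, smul_smul, mul_comm m (l ^ v), hmn]
      exact hcomp (r + v)
    ext r
    have hcop : Nat.Coprime (l ^ r) m :=
      (Nat.Coprime.pow_left r (((Fact.out : l.Prime).coprime_iff_not_dvd).2 hml))
    have : IsCoprime ((l : ℤ) ^ r) (m : ℤ) := by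
      rw [Int.isCoprime_iff_gcd_eq_one]
      exact_mod_cast hcop
    obtain ⟨u, w, huw⟩ := this
    have e1 : ((l:ℤ))^r • f.1 r = 0 := by
      rw [← Nat.cast_pow, natCast_zsmul]
      exact hf2 r
    have e2 : ((m:ℤ)) • f.1 r = 0 := by
      rw [natCast_zsmul]
      exact hm0 r
    have : f.1 r = (u * (l:ℤ)^r + w * m) • f.1 r := by rw [huw, one_smul]
    show f.1 r = 0
    rw [this, add_smul, mul_smul, mul_smul, e1, e2, smul_zero, smul_zero, add_zero]
end
end
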